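/- Suppose E|X|⁴ < ∞ and δ_n → 0 is a sequence of positive constants such that √n δ_n is increasing and Σ_k δ_{2^k}^{-2} 2^{2k} P(|X| ≥ 2^{k/2} δ_{2^k}) < ∞. Let {x_ij} be a double array of independent random variables satisfying p^{-1}Σ_{i≤p} P(|x_ij| > x) ≤ K P(|X| > x) and n^{-1}Σ_{j≤n} P(|x_ij| > x) ≤ K P(|X| > x) for all x > 0 and some constant K, with y_n = p/n → y > 0. Define x_ijn = x_ij I(|x_ij| ≤ δ_n √n) and let Ŝ_n be the matrix n^{-1} X̂_n X̂_n* built from the truncated variables (X̂_n = (x_ijn)), while S_n = n^{-1} X_n X_n*. Then P(Ŝ_n ≠ S_n infinitely often) = 0. -/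

import Mathlib

open MeasureTheory ProbabilityTheory Filter Matrix Complex Topology
open scoped ENNReal

/-!
`Ŝₙ ≠ Sₙ` forces some entry `x_ij` with `i < p n`, `j < n` above `δₙ√n`. Group the indices `n`
into dyadic blocks `2ᵏ ≤ n < 2ᵏ⁺¹`: since `√n δₙ` is increasing and `p n` is of order `n`, on the
`k`-th block every such event lies in the event that an entry of one `O(2ᵏ) × 2ᵏ⁺¹` corner exceeds
`2^(k/2) δ(2ᵏ)`. A union bound with the row tail domination bounds its probability by
`O(4ᵏ P(|X₀| ≥ 2^(k/2) δ(2ᵏ)))`, which is summable by hypothesis (`δ ≤ 1` eventually), and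
Borel–Cantelli over the blocks concludes.
-/

def dyadicBlock (k : ℕ) : Finset ℕ := Finset.Ico (2 ^ k) (2 ^ (k + 1))

lemma mem_dyadicBlock_log {n : ℕ} (hn : n ≠ 0) : n ∈ dyadicBlock (Nat.log 2 n) :=
  Finset.mem_Ico.2 ⟨Nat.pow_log_le_self 2 hn, Nat.lt_pow_succ_log_self one_lt_two n⟩

lemma limsup_subset_limsup_biUnion_dyadicBlock {α : Type*} (E : ℕ → Set α) :
    limsup E atTop ⊆ limsup (fun k => ⋃ n ∈ dyadicBlock k, E n) atTop := by
  intro ω hω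
  simp only [limsup_eq_iInf_iSup_of_nat, Set.iInf_eq_iInter, Set.iSup_eq_iUnion,
    Set.mem_iInter, Set.mem_iUnion] at hω ⊢
  intro k
  obtain ⟨n, hkn, hωn⟩ := hω (2 ^ k)
  have hn : n ≠ 0 := Nat.one_le_iff_ne_zero.1 (Nat.one_le_two_pow.trans hkn)
  exact ⟨Nat.log 2 n, Nat.le_log_of_pow_le one_lt_two hkn,
    n, mem_dyadicBlock_log hn, hωn⟩

lemma measure_limsup_eq_zero_of_summable_dyadicBlock {α : Type*} [MeasurableSpace α]
    {μ : Measure α} [IsFiniteMeasure μ] {E : ℕ → Set α}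
    (h : Summable fun k => μ.real (⋃ n ∈ dyadicBlock k, E n)) :
    μ (limsup E atTop) = 0 := by
  refine measure_mono_null (limsup_subset_limsup_biUnion_dyadicBlock E) ?_
  refine measure_limsup_atTop_eq_zero ?_
  simpa only [ofReal_measureReal, ne_eq, measure_ne_top, not_false_eq_true] using
    h.tsum_ofReal_ne_top

def largeEntryEvent {Ω E : Type*} [Norm E] (x : ℕ → ℕ → Ω → E) (q n : ℕ) (t : ℝ) : Set Ω :=
  ⋃ j ∈ Finset.range n, ⋃ i ∈ Finset.range q, {ω | t < ‖x i j ω‖}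

section LargeEntries

variable {Ω E : Type*} [Norm E] (x : ℕ → ℕ → Ω → E)

lemma largeEntryEvent_mono {q q' n n' : ℕ} {t t' : ℝ} (hq : q ≤ q') (hn : n ≤ n') (ht : t' ≤ t) :
    largeEntryEvent x q n t ⊆ largeEntryEvent x q' n' t' := by
  simp only [largeEntryEvent, Set.subset_def, Set.mem_iUnion, Finset.mem_range, Set.mem_ofPred_eq]
  rintro ω ⟨j, hj, i, hi, hlarge⟩
  exact ⟨j, hj.trans_le hn, i, hi.trans_le hq, ht.trans_lt hlarge⟩

lemma measureReal_largeEntryEvent_le [MeasurableSpace Ω] (μ : Measure Ω) {q n : ℕ} {t b : ℝ}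
    (hrow : ∀ j < n, (q : ℝ)⁻¹ * ∑ i ∈ Finset.range q, μ.real {ω | t < ‖x i j ω‖} ≤ b) :
    μ.real (largeEntryEvent x q n t) ≤ n * (q * b) := by
  have hcol : ∀ j < n, ∑ i ∈ Finset.range q, μ.real {ω | t < ‖x i j ω‖} ≤ q * b := by
    intro j hj
    rcases q.eq_zero_or_pos with rfl | hq
    · simp
    · exact (inv_mul_le_iff₀ (by positivity)).1 (hrow j hj)
  calc μ.real (largeEntryEvent x q n t)
      ≤ ∑ j ∈ Finset.range n, ∑ i ∈ Finset.range q, μ.real {ω | t < ‖x i j ω‖} :=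
        (measureReal_biUnion_finset_le _ _).trans
          (Finset.sum_le_sum fun j _ => measureReal_biUnion_finset_le _ _)
    _ ≤ ∑ j ∈ Finset.range n, (q * b : ℝ) :=
        Finset.sum_le_sum fun j hj => hcol j (Finset.mem_range.1 hj)
    _ = n * (q * b) := by simp

lemma measureReal_iUnion_dyadicBlock_le [MeasurableSpace Ω] (μ : Measure Ω) [IsFiniteMeasure μ]
    (p : ℕ → ℕ) {δ : ℕ → ℝ} (hδ : Monotone fun n : ℕ => √n * δ n) {k m : ℕ}
    (hkm : 2 ^ (k + 1) ≤ m) (hp : ∀ n ∈ dyadicBlock k, p n ≤ p m) {b : ℝ}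
    (hrow : ∀ j < m, (p m : ℝ)⁻¹ *
      ∑ i ∈ Finset.range (p m), μ.real {ω | √(2 ^ k) * δ (2 ^ k) < ‖x i j ω‖} ≤ b) :
    μ.real (⋃ n ∈ dyadicBlock k, largeEntryEvent x (p n) n (δ n * √n)) ≤
      2 ^ (k + 1) * (p m * b) := by
  have hblock : ⋃ n ∈ dyadicBlock k, largeEntryEvent x (p n) n (δ n * √n) ⊆
      largeEntryEvent x (p m) (2 ^ (k + 1)) (√(2 ^ k) * δ (2 ^ k)) := by
    refine Set.iUnion₂_subset fun n hn => largeEntryEvent_mono x (hp n hn)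
      (Finset.mem_Ico.1 hn).2.le ?_
    simpa [mul_comm] using hδ (Finset.mem_Ico.1 hn).1
  calc _ ≤ μ.real (largeEntryEvent x (p m) (2 ^ (k + 1)) (√(2 ^ k) * δ (2 ^ k))) :=
        measureReal_mono hblock
    _ ≤ 2 ^ (k + 1) * (p m * b) := by
        exact_mod_cast measureReal_largeEntryEvent_le x μ fun j hj => hrow j (hj.trans_le hkm)

end LargeEntries

lemma setOf_ne_subset_largeEntryEvent {Ω : Type*} (x : ℕ → ℕ → Ω → ℂ) {q n : ℕ} {t : ℝ}
    {S Shat : Ω → Matrix (Fin q) (Fin q) ℂ}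
    (hS : ∀ ω, S ω = ((n : ℂ))⁻¹ • ((Matrix.of fun (i : Fin q) (j : Fin n) => x i.1 j.1 ω) *
        (Matrix.of fun (i : Fin q) (j : Fin n) => x i.1 j.1 ω)ᴴ))
    (hShat : ∀ ω, Shat ω = ((n : ℂ))⁻¹ • ((Matrix.of fun (i : Fin q) (j : Fin n) =>
          if ‖x i.1 j.1 ω‖ ≤ t then x i.1 j.1 ω else 0) *
        (Matrix.of fun (i : Fin q) (j : Fin n) => if ‖x i.1 j.1 ω‖ ≤ t then x i.1 j.1 ω else 0)ᴴ)) :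
    {ω | Shat ω ≠ S ω} ⊆ largeEntryEvent x q n t := by
  intro ω hne
  by_contra hsmall
  simp only [largeEntryEvent, Set.mem_iUnion, Finset.mem_range, Set.mem_ofPred_eq,
    not_exists, not_lt] at hsmall
  have htrunc : (Matrix.of fun (i : Fin q) (j : Fin n) =>
      if ‖x i.1 j.1 ω‖ ≤ t then x i.1 j.1 ω else 0) = Matrix.of fun i j => x i.1 j.1 ω := by
    ext i j
    exact if_pos (hsmall j j.2 i i.2)
  exact hne (by rw [hS, hShat, htrunc])

lemma exists_mul_index_bounds {p : ℕ → ℕ} {y : ℝ} (hy : 0 < y)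
    (hp : Tendsto (fun n => (p n : ℝ) / n) atTop (𝓝 y)) :
    ∃ c N : ℕ, 0 < c ∧ ∀ m, N ≤ m →
      (∀ n, N ≤ n → n ≤ m → p n ≤ p (c * m)) ∧ (p (c * m) : ℝ) ≤ (y + 1) * (c * m) := by
  obtain ⟨N, hN⟩ := eventually_atTop.1 <|
    (hp.eventually (Ioo_mem_nhds (half_lt_self hy) (lt_add_one y))).and (eventually_gt_atTop 0)
  have hbounds : ∀ n, N ≤ n → y / 2 * n < p n ∧ (p n : ℝ) < (y + 1) * n := by
    intro n hn
    obtain ⟨⟨hlow, hup⟩, hn0⟩ := hN n hn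
    have hn0 : (0 : ℝ) < n := by exact_mod_cast hn0
    exact ⟨(lt_div_iff₀ hn0).1 hlow, (div_lt_iff₀ hn0).1 hup⟩
  set c := ⌈2 * (y + 1) / y⌉₊
  have hyc : y + 1 ≤ y / 2 * c := by
    have := mul_le_mul_of_nonneg_left (Nat.le_ceil (2 * (y + 1) / y)) (half_pos hy).le
    rwa [show y / 2 * (2 * (y + 1) / y) = y + 1 by field_simp] at this
  have hc : 1 ≤ c := Nat.one_le_ceil_iff.2 (by positivity)
  refine ⟨c, N, hc, fun m hm => ?_⟩
  have hcm := hbounds (c * m) (hm.trans (Nat.le_mul_of_pos_left m hc))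
  refine ⟨fun n hn hnm => ?_, by simpa using hcm.2.le⟩
  have hnm : (n : ℝ) ≤ m := by exact_mod_cast hnm
  have : (p n : ℝ) < p (c * m) := calc
    (p n : ℝ) < (y + 1) * n := (hbounds n hn).2
    _ ≤ (y / 2 * c) * m := by gcongr
    _ < p (c * m) := by simpa [mul_assoc] using hcm.1
  exact_mod_cast this.le

lemma exists_measureReal_iUnion_dyadicBlock_le {Ω E : Type*} [MeasurableSpace Ω] [Norm E]
    {μ : Measure Ω} [IsFiniteMeasure μ] {p : ℕ → ℕ} {y : ℝ} (hy : 0 < y)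
    (hyn : Tendsto (fun n => (p n : ℝ) / n) atTop (𝓝 y)) {x : ℕ → ℕ → Ω → E} {X₀ : Ω → ℝ}
    {K : ℝ} (htail_row : ∀ n j, j < n → ∀ s : ℝ, 0 < s →
      (p n : ℝ)⁻¹ * ∑ i ∈ Finset.range (p n), μ.real {ω | s < ‖x i j ω‖}
        ≤ K * μ.real {ω | s < |X₀ ω|})
    {δ : ℕ → ℝ} (hδpos : ∀ n, 0 < δ n) (hδmono : Monotone fun n : ℕ => √n * δ n) :
    ∃ C : ℝ, ∃ N : ℕ, 0 ≤ C ∧ ∀ k, N ≤ 2 ^ k →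
      μ.real (⋃ n ∈ dyadicBlock k, largeEntryEvent x (p n) n (δ n * √n)) ≤
        C * (2 ^ (2 * k) * μ.real {ω | (2 : ℝ) ^ ((k : ℝ) / 2) * δ (2 ^ k) ≤ |X₀ ω|}) := by
  obtain ⟨c, N, hc, hcN⟩ := exists_mul_index_bounds hy hyn
  refine ⟨4 * (y + 1) * c * max K 0, N,
    mul_nonneg (mul_nonneg (by linarith) c.cast_nonneg) (le_max_right K 0), fun k hk => ?_⟩
  set r := μ.real {ω | (2 : ℝ) ^ ((k : ℝ) / 2) * δ (2 ^ k) ≤ |X₀ ω|}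
  -- the row domination at this single `m` covers every entry met in the `k`-th block
  set m := c * 2 ^ (k + 1)
  obtain ⟨hp, hpm⟩ := hcN _ (hk.trans (Nat.pow_le_pow_right two_pos k.le_succ))
  have hsqrt : (2 : ℝ) ^ ((k : ℝ) / 2) = √(2 ^ k) := by
    rw [Real.sqrt_eq_rpow, ← Real.rpow_natCast, ← Real.rpow_mul zero_le_two, mul_one_div]
  have htail : μ.real {ω | √(2 ^ k) * δ (2 ^ k) < |X₀ ω|} ≤ r :=
    measureReal_mono fun ω hω => by simpa [r, hsqrt] using le_of_lt hω
  have hrow : ∀ j < m, (p m : ℝ)⁻¹ * ∑ i ∈ Finset.range (p m),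
      μ.real {ω | √(2 ^ k) * δ (2 ^ k) < ‖x i j ω‖} ≤ max K 0 * r := fun j hj =>
    (htail_row _ j hj _ (mul_pos (by positivity) (hδpos _))).trans
      (mul_le_mul (le_max_left K 0) htail measureReal_nonneg (le_max_right K 0))
  calc _ ≤ 2 ^ (k + 1) * (p m * (max K 0 * r)) :=
        measureReal_iUnion_dyadicBlock_le x μ p hδmono (Nat.le_mul_of_pos_left _ hc)
          (fun n hn => hp n (hk.trans (Finset.mem_Ico.1 hn).1) (Finset.mem_Ico.1 hn).2.le) hrow
    _ ≤ 2 ^ (k + 1) * ((y + 1) * (c * 2 ^ (k + 1)) * (max K 0 * r)) := by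
        gcongr
        exact_mod_cast hpm
    _ = 4 * (y + 1) * c * max K 0 * (2 ^ (2 * k) * r) := by ring

theorem truncation_does_not_matter_general
    {Ω : Type*} [MeasureSpace Ω] [IsProbabilityMeasure (ℙ : Measure Ω)]
    (p : ℕ → ℕ) (y : ℝ) (hy : 0 < y)
    (hyn : Tendsto (fun n => (p n : ℝ) / (n : ℝ)) atTop (𝓝 y))
    -- the double array
    (x : ℕ → ℕ → Ω → ℂ)
    -- tail domination by X₀ with E|X₀|⁴ < ∞
    (X₀ : Ω → ℝ)
    (K : ℝ)
    (htail_row : ∀ n j, j < n → ∀ s : ℝ, 0 < s →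
      (p n : ℝ)⁻¹ * ∑ i ∈ Finset.range (p n), (ℙ {ω | s < ‖x i j ω‖}).toReal
        ≤ K * (ℙ {ω | s < |X₀ ω|}).toReal)
    -- the truncation sequence δₙ
    (δ : ℕ → ℝ) (hδpos : ∀ n, 0 < δ n) (hδ0 : Tendsto δ atTop (𝓝 0))
    (hδmono : Monotone fun n : ℕ => Real.sqrt n * δ n)
    (hδsum : Summable fun k : ℕ =>
      ((δ (2 ^ k)) ^ 2)⁻¹ * (2 : ℝ) ^ (2 * k) *
        (ℙ {ω | (2 : ℝ) ^ ((k : ℝ) / 2) * δ (2 ^ k) ≤ |X₀ ω|}).toReal)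
    -- Sₙ and the truncated version Ŝₙ
    (S Shat : ∀ n : ℕ, Ω → Matrix (Fin (p n)) (Fin (p n)) ℂ)
    (hSdef : ∀ n ω, S n ω =
      ((n : ℂ))⁻¹ • ((Matrix.of fun (i : Fin (p n)) (j : Fin n) => x i.1 j.1 ω) *
        (Matrix.of fun (i : Fin (p n)) (j : Fin n) => x i.1 j.1 ω)ᴴ))
    (hShatdef : ∀ n ω, Shat n ω =
      ((n : ℂ))⁻¹ • ((Matrix.of fun (i : Fin (p n)) (j : Fin n) =>
          if ‖x i.1 j.1 ω‖ ≤ δ n * Real.sqrt n then x i.1 j.1 ω else 0) *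
        (Matrix.of fun (i : Fin (p n)) (j : Fin n) =>
          if ‖x i.1 j.1 ω‖ ≤ δ n * Real.sqrt n then x i.1 j.1 ω else 0)ᴴ)) :
    ℙ (Filter.limsup (fun n => {ω | Shat n ω ≠ S n ω}) atTop) = 0 := by
  refine measure_mono_null (limsup_le_limsup (.of_forall fun n =>
    setOf_ne_subset_largeEntryEvent x (hSdef n) (hShatdef n))) ?_
  refine measure_limsup_eq_zero_of_summable_dyadicBlock ?_
  obtain ⟨C, N, hC, hblock⟩ :=
    exists_measureReal_iUnion_dyadicBlock_le (μ := ℙ) hy hyn htail_row hδpos hδmono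
  have htwo_pow := tendsto_pow_atTop_atTop_of_one_lt (α := ℕ) one_lt_two
  have hδ_le_one : ∀ᶠ k in atTop, δ (2 ^ k) ≤ 1 :=
    ((hδ0.comp htwo_pow).eventually (gt_mem_nhds one_pos)).mono fun _ h => h.le
  refine (hδsum.mul_left C).of_norm_bounded_eventually_nat ?_
  filter_upwards [hδ_le_one, htwo_pow.eventually_ge_atTop N] with k hδk hk
  have hinv : 1 ≤ (δ (2 ^ k) ^ 2)⁻¹ :=
    (one_le_inv₀ (pow_pos (hδpos _) 2)).2 (pow_le_one₀ (hδpos _).le hδk)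
  rw [Real.norm_of_nonneg measureReal_nonneg, mul_assoc _ (2 ^ (2 * k) : ℝ)]
  exact (hblock k hk).trans
    (mul_le_mul_of_nonneg_left (le_mul_of_one_le_left (by positivity) hinv) hC)

/-- Truncation step: if `x_ijn = x_ij I(|x_ij| ≤ δₙ√n)` and `Ŝₙ` is the sample covariance
matrix built from the truncated variables while `Sₙ` is built from the original ones, then
`P(Ŝₙ ≠ Sₙ i.o.) = 0`. -/
theorem truncation_does_not_matter
    {Ω : Type*} [MeasureSpace Ω] [IsProbabilityMeasure (ℙ : Measure Ω)]
    (p : ℕ → ℕ) (y : ℝ) (hy : 0 < y)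
    (hyn : Tendsto (fun n => (p n : ℝ) / (n : ℝ)) atTop (𝓝 y))
    -- the double array
    (x : ℕ → ℕ → Ω → ℂ)
    (hxmeas : ∀ i j, Measurable (x i j))
    (hxindep : iIndepFun (fun ij : ℕ × ℕ => x ij.1 ij.2) ℙ)
    -- tail domination by X₀ with E|X₀|⁴ < ∞
    (X₀ : Ω → ℝ) (hX₀meas : Measurable X₀)
    (hX₀4 : Integrable (fun ω => X₀ ω ^ 4) ℙ)
    (K : ℝ)
    (htail_row : ∀ n j, j < n → ∀ s : ℝ, 0 < s →
      (p n : ℝ)⁻¹ * ∑ i ∈ Finset.range (p n), (ℙ {ω | s < ‖x i j ω‖}).toReal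
        ≤ K * (ℙ {ω | s < |X₀ ω|}).toReal)
    (htail_col : ∀ n i, i < p n → ∀ s : ℝ, 0 < s →
      (n : ℝ)⁻¹ * ∑ j ∈ Finset.range n, (ℙ {ω | s < ‖x i j ω‖}).toReal
        ≤ K * (ℙ {ω | s < |X₀ ω|}).toReal)
    -- the truncation sequence δₙ
    (δ : ℕ → ℝ) (hδpos : ∀ n, 0 < δ n) (hδ0 : Tendsto δ atTop (𝓝 0))
    (hδmono : Monotone fun n : ℕ => Real.sqrt n * δ n)
    (hδsum : Summable fun k : ℕ =>
      ((δ (2 ^ k)) ^ 2)⁻¹ * (2 : ℝ) ^ (2 * k) *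
        (ℙ {ω | (2 : ℝ) ^ ((k : ℝ) / 2) * δ (2 ^ k) ≤ |X₀ ω|}).toReal)
    -- Sₙ and the truncated version Ŝₙ
    (S Shat : ∀ n : ℕ, Ω → Matrix (Fin (p n)) (Fin (p n)) ℂ)
    (hSdef : ∀ n ω, S n ω =
      ((n : ℂ))⁻¹ • ((Matrix.of fun (i : Fin (p n)) (j : Fin n) => x i.1 j.1 ω) *
        (Matrix.of fun (i : Fin (p n)) (j : Fin n) => x i.1 j.1 ω)ᴴ))
    (hShatdef : ∀ n ω, Shat n ω =
      ((n : ℂ))⁻¹ • ((Matrix.of fun (i : Fin (p n)) (j : Fin n) =>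
          if ‖x i.1 j.1 ω‖ ≤ δ n * Real.sqrt n then x i.1 j.1 ω else 0) *
        (Matrix.of fun (i : Fin (p n)) (j : Fin n) =>
          if ‖x i.1 j.1 ω‖ ≤ δ n * Real.sqrt n then x i.1 j.1 ω else 0)ᴴ)) :
    ℙ (Filter.limsup (fun n => {ω | Shat n ω ≠ S n ω}) atTop) = 0 :=
  truncation_does_not_matter_general p y hy hyn x X₀ K htail_row δ hδpos hδ0 hδmono hδsum S Shat
    hSdef hShatdef
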